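/- Let N ≥ 1 and m be natural numbers and let a⁰, …, a^N be real polynomials with deg a^k ≤ m for every 0 ≤ k ≤ N, and let 𝓛 be the differential operator 𝓛u = Σ_{k=0}^{N} a^k · u^{(k)}. Then for all natural numbers i, j with (i : ℤ) > j + m or (i : ℤ) < j − 2N − m, one has ∫_{−1}^{1} (𝓛T_j)(x) · T_{N+i}^{(N)}(x) · (1 − x²)^{N − 1/2} dx = 0. (This expresses that the ultraspherical-coefficient representation L of 𝓛, whose (i,j) entry is proportional to this weighted integral, is a banded matrix.) -/

import Mathlib

/-
The derivatives `y = T_q^{(l)}` satisfy `(1 - x²) y'' - (2l + 1) x y' + (q² - l²) y = 0`, that is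
`((1 - x²)^(l + 1/2) y')' = (l² - q²) (1 - x²)^(l - 1/2) y`. Integrating by parts against a
polynomial `B` trades `B · T_q^{(l)}` at the weight `(1 - x²)^(l - 1/2)` for `B' · T_q^{(l+1)}`
at the weight `(1 - x²)^(l + 1/2)`; iterating until `B` is differentiated away shows that
`T_q^{(l)}` is orthogonal for `(1 - x²)^(l - 1/2)` to every polynomial of degree `< q - l`.
Factors `(1 - x²)^d` move freely between the weight and the integrand, and for `l = 0` (where
the weight `(1 - x²)^(-1/2)` is unbounded) the Chebyshev equation
`q² T_q = x T_q' - (1 - x²) T_q''` reduces to `l = 1, 2`.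

The upper band is then the orthogonality of `T_{N+i}^{(N)}` to `𝓛 T_j`, of degree `≤ j + m`; the
lower band is the orthogonality of each `T_j^{(k)}` to `(1 - x²)^(N - k) a^k T_{N+i}^{(N)}`.
-/

open Polynomial Finset
open Polynomial.Chebyshev intervalIntegral

noncomputable def weightedIntegral (e : ℝ) (P : ℝ[X]) : ℝ :=
  ∫ x in (-1 : ℝ)..1, P.eval x * (1 - x ^ 2) ^ e

/-- `(1 - x²)^(-e) · d/dx [(1 - x²)^(e + 1) P(x)]`. -/
noncomputable def weightedDerivative (e : ℝ) (P : ℝ[X]) : ℝ[X] :=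
  (1 - X ^ 2) * derivative P - C (2 * (e + 1)) * X * P

lemma one_sub_sq_nonneg_of_mem_uIcc {x : ℝ} (hx : x ∈ Set.uIcc (-1) 1) : 0 ≤ 1 - x ^ 2 := by
  rw [Set.uIcc_of_le (by norm_num)] at hx
  nlinarith [hx.1, hx.2]

lemma intervalIntegrable_eval_mul_one_sub_sq_rpow {e : ℝ} (he : 0 ≤ e) (P : ℝ[X]) :
    IntervalIntegrable (fun x => P.eval x * (1 - x ^ 2) ^ e) MeasureTheory.volume (-1) 1 := by
  refine (P.continuous.mul ?_).intervalIntegrable _ _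
  exact (continuous_const.sub (continuous_pow 2)).rpow_const fun _ => Or.inr he

namespace weightedIntegral

lemma add {e : ℝ} (he : 0 ≤ e) (P Q : ℝ[X]) :
    weightedIntegral e (P + Q) = weightedIntegral e P + weightedIntegral e Q := by
  simp only [weightedIntegral, eval_add, add_mul]
  exact integral_add (intervalIntegrable_eval_mul_one_sub_sq_rpow he P)
    (intervalIntegrable_eval_mul_one_sub_sq_rpow he Q)

lemma sum {ι : Type*} {e : ℝ} (he : 0 ≤ e) (s : Finset ι) (P : ι → ℝ[X]) :
    weightedIntegral e (∑ k ∈ s, P k) = ∑ k ∈ s, weightedIntegral e (P k) := by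
  simp only [weightedIntegral, eval_finsetSum, Finset.sum_mul]
  exact integral_finsetSum fun k _ => intervalIntegrable_eval_mul_one_sub_sq_rpow he (P k)

lemma C_mul (e c : ℝ) (P : ℝ[X]) : weightedIntegral e (C c * P) = c * weightedIntegral e P := by
  simp only [weightedIntegral, eval_mul, eval_C, mul_assoc, integral_const_mul]

lemma zero (e : ℝ) : weightedIntegral e 0 = 0 := by simp [weightedIntegral]

lemma one_sub_X_sq_pow_mul {e : ℝ} {d : ℕ} (h : e + d ≠ 0) (P : ℝ[X]) :
    weightedIntegral e ((1 - X ^ 2) ^ d * P) = weightedIntegral (e + d) P := by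
  refine integral_congr fun x hx => ?_
  rw [Real.rpow_add_natCast' (one_sub_sq_nonneg_of_mem_uIcc hx) h]
  simp only [eval_mul, eval_pow, eval_sub, eval_one, eval_X]
  ring

end weightedIntegral

lemma weightedIntegral_weightedDerivative {e : ℝ} (he : 0 ≤ e) (P : ℝ[X]) :
    weightedIntegral e (weightedDerivative e P) = 0 := by
  have hderiv : ∀ x ∈ Set.uIcc (-1 : ℝ) 1, HasDerivAt (fun y => P.eval y * (1 - y ^ 2) ^ (e + 1))
      ((weightedDerivative e P).eval x * (1 - x ^ 2) ^ e) x := by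
    intro x hx
    have hw : HasDerivAt (fun y : ℝ => 1 - y ^ 2) (-(2 * x)) x := by
      simpa using (hasDerivAt_pow 2 x).const_sub 1
    refine ((P.hasDerivAt x).mul
      (hw.rpow_const (p := e + 1) (Or.inr (by linarith)))).congr_deriv ?_
    rw [add_sub_cancel_right, Real.rpow_add_one' (one_sub_sq_nonneg_of_mem_uIcc hx) (by linarith)]
    simp only [weightedDerivative, eval_sub, eval_mul, eval_one, eval_pow, eval_X, eval_C]
    ring
  rw [weightedIntegral, integral_eq_sub_of_hasDerivAt hderiv
    (intervalIntegrable_eval_mul_one_sub_sq_rpow he _)]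
  norm_num [Real.zero_rpow (by linarith : e + 1 ≠ 0)]

lemma weightedIntegral_mul_weightedDerivative {e : ℝ} (he : 0 ≤ e) (A B : ℝ[X]) :
    weightedIntegral e (A * weightedDerivative e B) =
      -weightedIntegral (e + 1) (derivative A * B) := by
  have h := weightedIntegral_weightedDerivative he (A * B)
  rw [show weightedDerivative e (A * B) = (1 - X ^ 2) ^ 1 * (derivative A * B) +
      A * weightedDerivative e B by simp only [weightedDerivative, derivative_mul]; ring,
    weightedIntegral.add he, weightedIntegral.one_sub_X_sq_pow_mul (by push_cast; linarith)] at h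
  push_cast at h
  linarith

lemma weightedDerivative_iterate_derivative_T (q : ℤ) (l : ℕ) :
    weightedDerivative (l - 1 / 2) (derivative^[l + 1] (T ℝ q)) =
      C ((l : ℝ) ^ 2 - q ^ 2) * derivative^[l] (T ℝ q) := by
  rw [weightedDerivative, ← Function.iterate_succ_apply' derivative,
    one_sub_X_sq_mul_iterate_derivative_T_eq_poly_in_T,
    show 2 * ((l : ℝ) - 1 / 2 + 1) = 2 * l + 1 by ring]
  simp only [map_add, map_mul, map_sub, map_pow, map_natCast, map_intCast, map_ofNat, map_one]
  ring

lemma sq_sub_sq_mul_weightedIntegral_mul_iterate_derivative_T (q : ℤ) {l : ℕ} (hl : 0 < l)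
    (B : ℝ[X]) :
    ((q : ℝ) ^ 2 - l ^ 2) * weightedIntegral (l - 1 / 2) (B * derivative^[l] (T ℝ q)) =
      weightedIntegral (l + 1 / 2) (derivative B * derivative^[l + 1] (T ℝ q)) := by
  have he : (0 : ℝ) ≤ l - 1 / 2 := by
    have : (1 : ℝ) ≤ l := by exact_mod_cast hl
    linarith
  have h := weightedIntegral_mul_weightedDerivative he B (derivative^[l + 1] (T ℝ q))
  rw [weightedDerivative_iterate_derivative_T, mul_left_comm, weightedIntegral.C_mul,
    show (l : ℝ) - 1 / 2 + 1 = l + 1 / 2 by ring] at h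
  linarith

lemma weightedIntegral_mul_iterate_derivative_T_eq_zero {q l : ℕ} (hl : 0 < l) {B : ℝ[X]}
    (hB : B.natDegree + l < q) : weightedIntegral (l - 1 / 2) (B * derivative^[l] (T ℝ q)) = 0 := by
  induction h : B.natDegree using Nat.strong_induction_on generalizing l B with
  | _ n ih =>
  have hq : ((q : ℤ) : ℝ) ^ 2 - (l : ℝ) ^ 2 ≠ 0 := by
    have : (l : ℝ) < q := by exact_mod_cast (by omega : l < q)
    push_cast
    nlinarith
  suffices weightedIntegral (l + 1 / 2) (derivative B * derivative^[l + 1] (T ℝ q)) = 0 by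
    have hstep := sq_sub_sq_mul_weightedIntegral_mul_iterate_derivative_T q hl B
    rw [this] at hstep
    exact (mul_eq_zero.mp hstep).resolve_left hq
  rcases Nat.eq_zero_or_pos n with rfl | hn
  · rw [derivative_of_natDegree_zero h, zero_mul, weightedIntegral.zero]
  · have hB' := natDegree_derivative_lt (p := B) (by omega)
    convert ih _ (h ▸ hB') (l := l + 1) (by omega) (by omega) rfl using 2
    push_cast
    ring

lemma weightedIntegral_natCast_add_mul_iterate_derivative_T_eq_zero_of_pos {q l d : ℕ}
    (hl : 0 < l) {B : ℝ[X]} (hB : B.natDegree + l + 2 * d < q) :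
    weightedIntegral ((l + d : ℕ) - 1 / 2) (B * derivative^[l] (T ℝ q)) = 0 := by
  have hl' : (1 : ℝ) ≤ l := by exact_mod_cast hl
  have hpow : ((1 - X ^ 2 : ℝ[X]) ^ d).natDegree ≤ 2 * d := by compute_degree; omega
  have hdeg := natDegree_mul_le (p := (1 - X ^ 2 : ℝ[X]) ^ d) (q := B)
  rw [show ((l + d : ℕ) : ℝ) - 1 / 2 = (l - 1 / 2 : ℝ) + d by push_cast; ring,
    ← weightedIntegral.one_sub_X_sq_pow_mul
      (by linarith [d.cast_nonneg (α := ℝ)] : (0 : ℝ) < _).ne', ← mul_assoc]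
  exact weightedIntegral_mul_iterate_derivative_T_eq_zero hl (by omega)

lemma weightedIntegral_natCast_add_one_mul_T_eq_zero {q d : ℕ} {B : ℝ[X]}
    (hB : B.natDegree + 2 * (d + 1) < q) :
    weightedIntegral ((d + 1 : ℕ) - 1 / 2) (B * T ℝ q) = 0 := by
  have he : (0 : ℝ) ≤ ((1 + d : ℕ) : ℝ) - 1 / 2 := by
    push_cast
    linarith [d.cast_nonneg (α := ℝ)]
  have hsplit : (B * X) * derivative^[1] (T ℝ q) =
      C ((q : ℝ) ^ 2) * (B * T ℝ q) + (1 - X ^ 2) ^ 1 * (B * derivative^[2] (T ℝ q)) := by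
    have hode := one_sub_X_sq_mul_iterate_derivative_T_eq_poly_in_T (R := ℝ) q 0
    simp only [Function.iterate_zero, id_eq, zero_add, pow_one, map_pow, map_natCast] at hode ⊢
    push_cast at hode
    linear_combination -B * hode
  have hBX : (B * X).natDegree ≤ B.natDegree + 1 := by compute_degree
  have h := congrArg (weightedIntegral (((1 + d : ℕ) : ℝ) - 1 / 2)) hsplit
  rw [weightedIntegral.add he, weightedIntegral.C_mul,
    weightedIntegral.one_sub_X_sq_pow_mul (by linarith),
    show ((1 + d : ℕ) : ℝ) - 1 / 2 + (1 : ℕ) = ((2 + d : ℕ) : ℝ) - 1 / 2 by push_cast; ring,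
    weightedIntegral_natCast_add_mul_iterate_derivative_T_eq_zero_of_pos one_pos (by omega),
    weightedIntegral_natCast_add_mul_iterate_derivative_T_eq_zero_of_pos two_pos (by omega),
    add_zero, eq_comm, add_comm 1 d] at h
  exact (mul_eq_zero.mp h).resolve_left (pow_ne_zero 2 (Nat.cast_ne_zero.mpr (by omega)))

lemma weightedIntegral_natCast_add_mul_iterate_derivative_T_eq_zero {q l d : ℕ}
    (hld : 1 ≤ l + d) {B : ℝ[X]} (hB : B.natDegree + l + 2 * d < q) :
    weightedIntegral ((l + d : ℕ) - 1 / 2) (B * derivative^[l] (T ℝ q)) = 0 := by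
  rcases Nat.eq_zero_or_pos l with rfl | hl
  · obtain ⟨d, rfl⟩ : ∃ d', d = d' + 1 := ⟨d - 1, by omega⟩
    rw [zero_add, Function.iterate_zero, id_eq]
    exact weightedIntegral_natCast_add_one_mul_T_eq_zero (by omega)
  · exact weightedIntegral_natCast_add_mul_iterate_derivative_T_eq_zero_of_pos hl hB

/-- The ultraspherical-coefficient representation `L` of the differential operator
`𝓛 u = Σ_{k=0}^N a^k u^{(k)}` is banded: the weighted integral
`∫ (𝓛 T_j)(x) T_{N+i}^{(N)}(x) (1-x²)^{N-1/2} dx` vanishes whenever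
`i > j + m` or `i < j - 2N - m`. -/
theorem ode_operator_matrix_banded
    (N m : ℕ) (hN : 1 ≤ N) (a : Fin (N + 1) → ℝ[X])
    (ha : ∀ k, (a k).degree ≤ (m : ℕ)) (i j : ℕ)
    (hij : (i : ℤ) > (j : ℤ) + m ∨ (i : ℤ) < (j : ℤ) - 2 * N - m) :
    ∫ x in (-1 : ℝ)..1,
      (∑ k : Fin (N + 1),
          a k * derivative^[(k : ℕ)] (Polynomial.Chebyshev.T ℝ (j : ℤ))).eval x *
        (derivative^[N] (Polynomial.Chebyshev.T ℝ ((N : ℤ) + (i : ℤ)))).eval x *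
        (1 - x ^ 2) ^ ((N : ℝ) - 1 / 2) = 0 := by
  rw [show (N : ℤ) + i = ((N + i : ℕ) : ℤ) by push_cast; ring]
  set W := derivative^[N] (T ℝ ((N + i : ℕ) : ℤ))
  have hW : W.natDegree ≤ i := (natDegree_iterate_derivative _ _).trans (by rw [natDegree_T]; omega)
  have ha' k : (a k).natDegree ≤ m := natDegree_le_of_degree_le (ha k)
  simp only [← eval_mul]
  change weightedIntegral _ _ = 0
  rcases hij with hup | hlow
  · have hL : (∑ k, a k * derivative^[k] (T ℝ j)).natDegree ≤ m + j :=
      natDegree_sum_le_of_forall_le _ _ fun k _ => natDegree_mul_le.trans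
        (add_le_add (ha' k) ((natDegree_iterate_derivative _ _).trans (by rw [natDegree_T]; omega)))
    exact weightedIntegral_mul_iterate_derivative_T_eq_zero hN (by omega)
  · rw [Finset.sum_mul, weightedIntegral.sum (by linarith [(by exact_mod_cast hN : (1 : ℝ) ≤ N)])]
    refine Finset.sum_eq_zero fun k _ => ?_
    have hdeg : (a k * W).natDegree ≤ m + i := natDegree_mul_le.trans (add_le_add (ha' k) hW)
    have h := weightedIntegral_natCast_add_mul_iterate_derivative_T_eq_zero (q := j) (l := k)
      (d := N - k) (by omega) (B := a k * W) (by omega)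
    rwa [Nat.add_sub_cancel' k.is_le, mul_right_comm] at h
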